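/- arXiv:1302.5176 — 7 statements merged into one kernel-verified Lean document; each statement's English description precedes it below -/
import Mathlib

section
/- Let θ₁, θ₂ ∈ ℝ and η ∈ ℂ. The determinant of the 3×3 complex matrix with rows (−4η, 1+e^{−iθ₁}, 1+e^{−iθ₁}), (1+e^{iθ₁}, −3η, e^{iθ₂}), (1+e^{iθ₁}, e^{−iθ₂}, −3η) equals −4·(9η³ − η − (cos θ₁ + 1)(3η + cos θ₂)). -/
/-!
Writing `p = 1 + e^{iθ₁}` and `q = e^{iθ₂}`, the matrix is `!![a, p̄, p̄; p, b, q; p, q̄, b]`, whose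
determinant is `a (b² - q q̄) - p̄ p (2b - q - q̄)`. Since `|q|² = 1`, `q + q̄ = 2 cos θ₂` and
`|p|² = 2 (cos θ₁ + 1)`, this is the stated cubic in `η`.
-/

theorem Matrix.det_fin_three_of_repeated_entries {R : Type*} [CommRing R]
    (a s p b q r : R) :
    Matrix.det !![a, s, s; p, b, q; p, r, b] = a * (b ^ 2 - q * r) - s * p * (2 * b - q - r) := by
  rw [Matrix.det_fin_three]
  simp only [Matrix.of_apply, Matrix.cons_val', Matrix.cons_val_zero, Matrix.cons_val_one,
    Matrix.cons_val_two, Matrix.tail_cons, Matrix.empty_val',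
    Matrix.cons_val_fin_one, Matrix.vecHead]
  ring

namespace Complex

theorem exp_neg_I_mul_mul_exp_I_mul (θ : ℝ) : exp (-(I * θ)) * exp (I * θ) = 1 := by
  rw [← exp_add, neg_add_cancel, exp_zero]

theorem exp_I_mul_add_exp_neg_I_mul (θ : ℝ) : exp (I * θ) + exp (-(I * θ)) = 2 * Real.cos θ := by
  rw [ofReal_cos, two_cos, mul_comm I, neg_mul]

theorem one_add_exp_neg_I_mul_mul_one_add_exp_I_mul (θ : ℝ) :
    (1 + exp (-(I * θ))) * (1 + exp (I * θ)) = 2 * (Real.cos θ + 1) := by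
  linear_combination exp_neg_I_mul_mul_exp_I_mul θ + exp_I_mul_add_exp_neg_I_mul θ

end Complex

/-- The determinant of the coefficient matrix of the linear system for the vertex
values (A,B,C) in the Floquet–Bloch eigenvalue problem on the graphyne quantum graph. -/
theorem graphyne_vertex_matrix_det (θ₁ θ₂ : ℝ) (η : ℂ) :
    Matrix.det
      !![-4 * η, 1 + Complex.exp (-(Complex.I * θ₁)), 1 + Complex.exp (-(Complex.I * θ₁));
         1 + Complex.exp (Complex.I * θ₁), -3 * η, Complex.exp (Complex.I * θ₂);
         1 + Complex.exp (Complex.I * θ₁), Complex.exp (-(Complex.I * θ₂)), -3 * η] =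
      -4 * (9 * η ^ 3 - η - ((Real.cos θ₁ : ℂ) + 1) * (3 * η + (Real.cos θ₂ : ℂ))) := by
  rw [Matrix.det_fin_three_of_repeated_entries, mul_comm (Complex.exp (Complex.I * θ₂)),
    Complex.exp_neg_I_mul_mul_exp_I_mul, Complex.one_add_exp_neg_I_mul_mul_one_add_exp_I_mul,
    sub_sub, Complex.exp_I_mul_add_exp_neg_I_mul]
  ring
end

section
/- For every a ∈ [0,2] and b ∈ [−1,1] there exist real numbers r₁, r₂, r₃ with −1 ≤ r₁ ≤ −1/3 ≤ r₂ ≤ 1/3 ≤ r₃ ≤ 1 such that 9x³ − x − a(3x + b) = 9(x − r₁)(x − r₂)(x − r₃) for all real x. In particular, all three roots of the cubic 9x³ − x = a(3x + b) are real, and there is one root in each of the intervals [−1,−1/3], [−1/3,1/3], [1/3,1]. -/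
/-!
At `x = -1, -1/3, 1/3, 1` the cubic `f x = 9x³ - x - a(3x + b)` takes the values
`a(3 - b) - 8 ≤ 0`, `a(1 - b) ≥ 0`, `-a(1 + b) ≤ 0` and `8 - a(3 + b) ≥ 0`, so by the intermediate
value theorem it has zeros in `[-1, -1/3]` and in `[1/3, 1]`. Let `r₁` and `r₃` be its least and
greatest zeros in `[-1, 1]`. As `f` has no `x²` term, Vieta's formulas make `r₂ = -(r₁ + r₃)` the
third root; it lies in `[-1, 1]`, hence between `r₁` and `r₃`, and the signs of `f (∓1/3)` then
force `-1/3 ≤ r₂ ≤ 1/3`.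
-/

open Set

theorem depressed_cubic_eq_mul_of_two_roots {K : Type*} [Field K] {c p q r s : K} (hrs : r ≠ s)
    (hr : c * r ^ 3 + p * r + q = 0) (hs : c * s ^ 3 + p * s + q = 0) (x : K) :
    c * x ^ 3 + p * x + q = c * (x - r) * (x + (r + s)) * (x - s) := by
  have hdiff : (r - s) * (c * x ^ 3 + p * x + q - c * (x - r) * (x + (r + s)) * (x - s)) = 0 := by
    linear_combination (x - s) * hr - (x - r) * hs
  exact sub_eq_zero.mp ((mul_eq_zero.mp hdiff).resolve_left (sub_ne_zero.mpr hrs))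

section MiddleRoot

variable {R : Type*} [CommRing R] [LinearOrder R] [IsStrictOrderedRing R] {c u r₁ r₂ r₃ : R}

theorem le_of_mul_sub_mul_sub_mul_sub_nonpos (hc : 0 < c) (h₁ : r₁ < u) (h₂₃ : r₂ ≤ r₃)
    (h : c * (u - r₁) * (u - r₂) * (u - r₃) ≤ 0) : r₂ ≤ u := by
  by_contra! hu
  have hpos : 0 < c * (u - r₁) := mul_pos hc (sub_pos.mpr h₁)
  nlinarith [mul_pos hpos (mul_pos (sub_pos.mpr hu) (sub_pos.mpr (hu.trans_le h₂₃)))]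

theorem le_of_mul_sub_mul_sub_mul_sub_nonneg (hc : 0 < c) (h₃ : u < r₃) (h₁₂ : r₁ ≤ r₂)
    (h : 0 ≤ c * (u - r₁) * (u - r₂) * (u - r₃)) : u ≤ r₂ := by
  by_contra! hu
  have hneg : c * (u - r₃) < 0 := mul_neg_of_pos_of_neg hc (sub_neg.mpr h₃)
  nlinarith [mul_neg_of_neg_of_pos hneg
    (mul_pos (sub_pos.mpr hu) (sub_pos.mpr (h₁₂.trans_lt hu)))]

end MiddleRoot

def graphyneCubic (a b x : ℝ) : ℝ := 9 * x ^ 3 - x - a * (3 * x + b)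

def graphyneCubicZeros (a b : ℝ) : Set ℝ := {x ∈ Icc (-1) 1 | graphyneCubic a b x = 0}

namespace graphyneCubic

variable {a b : ℝ}

theorem continuous (a b : ℝ) : Continuous (graphyneCubic a b) := by
  unfold graphyneCubic; fun_prop

theorem eq_mul_of_two_roots {r s : ℝ} (hrs : r ≠ s) (hr : graphyneCubic a b r = 0)
    (hs : graphyneCubic a b s = 0) (x : ℝ) :
    graphyneCubic a b x = 9 * (x - r) * (x - -(r + s)) * (x - s) := by
  unfold graphyneCubic at *
  linear_combination depressed_cubic_eq_mul_of_two_roots (c := (9 : ℝ)) (p := -1 - 3 * a)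
    (q := -(a * b)) hrs (by linear_combination hr) (by linear_combination hs) x

variable (ha : a ∈ Icc (0 : ℝ) 2) (hb : b ∈ Icc (-1 : ℝ) 1)
include ha hb

theorem neg_one_nonpos : graphyneCubic a b (-1) ≤ 0 := by
  unfold graphyneCubic; nlinarith [ha.1, ha.2, hb.1, hb.2]

theorem neg_third_nonneg : 0 ≤ graphyneCubic a b (-(1 / 3)) := by
  unfold graphyneCubic; nlinarith [ha.1, ha.2, hb.1, hb.2]

theorem third_nonpos : graphyneCubic a b (1 / 3) ≤ 0 := by
  unfold graphyneCubic; nlinarith [ha.1, ha.2, hb.1, hb.2]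

theorem one_nonneg : 0 ≤ graphyneCubic a b 1 := by
  unfold graphyneCubic; nlinarith [ha.1, ha.2, hb.1, hb.2]

theorem exists_extremal_zeros :
    ∃ r₁ r₃, IsLeast (graphyneCubicZeros a b) r₁ ∧ IsGreatest (graphyneCubicZeros a b) r₃ ∧
      r₁ ≤ -(1 / 3) ∧ 1 / 3 ≤ r₃ := by
  obtain ⟨x₁, hx₁, hfx₁⟩ := intermediate_value_Icc (by norm_num : (-1 : ℝ) ≤ -(1 / 3))
    (continuous a b).continuousOn
    ⟨neg_one_nonpos ha hb, neg_third_nonneg ha hb⟩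
  obtain ⟨x₃, hx₃, hfx₃⟩ := intermediate_value_Icc (by norm_num : (1 / 3 : ℝ) ≤ 1)
    (continuous a b).continuousOn
    ⟨third_nonpos ha hb, one_nonneg ha hb⟩
  have hx₁Z : x₁ ∈ graphyneCubicZeros a b := ⟨⟨hx₁.1, by linarith [hx₁.2]⟩, hfx₁⟩
  have hx₃Z : x₃ ∈ graphyneCubicZeros a b := ⟨⟨by linarith [hx₃.1], hx₃.2⟩, hfx₃⟩
  have hZ : IsCompact (graphyneCubicZeros a b) :=
    isCompact_Icc.inter_right (isClosed_eq (continuous a b) continuous_const)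
  obtain ⟨r₁, hr₁⟩ := hZ.exists_isLeast ⟨x₁, hx₁Z⟩
  obtain ⟨r₃, hr₃⟩ := hZ.exists_isGreatest ⟨x₃, hx₃Z⟩
  exact ⟨r₁, r₃, hr₁, hr₃, (hr₁.2 hx₁Z).trans hx₁.2, hx₃.1.trans (hr₃.2 hx₃Z)⟩

end graphyneCubic

/-- For a ∈ [0,2], b ∈ [−1,1], the cubic 9x³ − x − a(3x+b) has three real roots,
one in each of the intervals [−1,−1/3], [−1/3,1/3], [1/3,1]. -/
theorem graphyne_cubic_three_real_roots (a b : ℝ)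
    (ha : a ∈ Set.Icc (0 : ℝ) 2) (hb : b ∈ Set.Icc (-1 : ℝ) 1) :
    ∃ r₁ r₂ r₃ : ℝ,
      -1 ≤ r₁ ∧ r₁ ≤ -(1/3) ∧ -(1/3) ≤ r₂ ∧ r₂ ≤ 1/3 ∧ 1/3 ≤ r₃ ∧ r₃ ≤ 1 ∧
      ∀ x : ℝ, 9 * x ^ 3 - x - a * (3 * x + b) = 9 * (x - r₁) * (x - r₂) * (x - r₃) := by
  obtain ⟨r₁, r₃, hr₁, hr₃, hr₁_le, le_hr₃⟩ := graphyneCubic.exists_extremal_zeros ha hb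
  have hfac := graphyneCubic.eq_mul_of_two_roots (by linarith) hr₁.1.2 hr₃.1.2
  have hr₂ : -(r₁ + r₃) ∈ graphyneCubicZeros a b :=
    ⟨⟨by linarith [hr₃.1.1.2], by linarith [hr₁.1.1.1]⟩, by rw [hfac]; ring⟩
  refine ⟨r₁, -(r₁ + r₃), r₃, hr₁.1.1.1, hr₁_le, ?_, ?_, le_hr₃, hr₃.1.1.2, hfac⟩
  · refine le_of_mul_sub_mul_sub_mul_sub_nonneg (u := -(1 / 3)) (r₃ := r₃) (by norm_num : (0 : ℝ) < 9)
      (by linarith) (hr₁.2 hr₂) ?_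
    rw [← hfac]; exact graphyneCubic.neg_third_nonneg ha hb
  · refine le_of_mul_sub_mul_sub_mul_sub_nonpos (u := 1 / 3) (r₁ := r₁) (by norm_num : (0 : ℝ) < 9)
      (by linarith) (hr₃.2 hr₂) ?_
    rw [← hfac]; exact graphyneCubic.third_nonpos ha hb
end

section
/- For every y ∈ [−1,1] there exist θ₁, θ₂ ∈ [−π,π] such that 9y³ − y = (cos θ₁ + 1)(3y + cos θ₂). That is, as (θ₁,θ₂) ranges over the Brillouin zone, the roots of the dispersion cubic cover the whole interval [−1,1]. -/
/-!
Since `9y³ - y = y(3y - 1)(3y + 1)`, it can be written as `a(3y + b)` with `a ∈ [0, 2]` and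
`b ∈ [-1, 1]`: take `b = -1` for `y ≤ -1/3`, `b = 1` for `y ≥ 1/3`, and `a = 2` in between.
As `cos θ₁ + 1` sweeps `[0, 2]` and `cos θ₂` sweeps `[-1, 1]`, such `a, b` come from a point of
the Brillouin zone.
-/

open Real Set

theorem exists_cubic_eq_mul_add {y : ℝ} (hy : y ∈ Icc (-1 : ℝ) 1) :
    ∃ a ∈ Icc (0 : ℝ) 2, ∃ b ∈ Icc (-1 : ℝ) 1, 9 * y ^ 3 - y = a * (3 * y + b) := by
  obtain ⟨hy₁, hy₂⟩ := hy
  rcases le_or_gt y (-1 / 3) with hneg | hneg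
  · exact ⟨3 * y ^ 2 + y, ⟨by nlinarith, by nlinarith⟩, -1, by norm_num, by ring⟩
  rcases le_or_gt (1 / 3) y with hpos | hpos
  · exact ⟨3 * y ^ 2 - y, ⟨by nlinarith, by nlinarith⟩, 1, by norm_num, by ring⟩
  refine ⟨2, by norm_num, (9 * y ^ 3 - 7 * y) / 2, ⟨?_, ?_⟩, by ring⟩
  · nlinarith [mul_pos (mul_pos (by linarith : 0 < 1 - 3 * y) (by linarith : 0 < 2 - 3 * y))
      (by linarith : 0 < y + 1)]
  · nlinarith [mul_pos (mul_pos (by linarith : 0 < 3 * y + 1) (by linarith : 0 < 3 * y + 2))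
      (by linarith : 0 < 1 - y)]

theorem exists_mem_Icc_neg_pi_pi_cos_eq {c : ℝ} (hc : c ∈ Icc (-1 : ℝ) 1) :
    ∃ θ ∈ Icc (-π) π, cos θ = c := by
  obtain ⟨θ, ⟨hθ₀, hθπ⟩, hθ⟩ := surjOn_cos hc
  exact ⟨θ, ⟨by linarith [pi_pos], hθπ⟩, hθ⟩

/-- Every y ∈ [−1,1] is a root of the dispersion cubic for some quasimomentum
(θ₁,θ₂) in the Brillouin zone [−π,π]². -/
theorem graphyne_cubic_roots_cover (y : ℝ) (hy : y ∈ Set.Icc (-1 : ℝ) 1) :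
    ∃ θ₁ ∈ Set.Icc (-π) π, ∃ θ₂ ∈ Set.Icc (-π) π,
      9 * y ^ 3 - y = (Real.cos θ₁ + 1) * (3 * y + Real.cos θ₂) := by
  obtain ⟨a, ⟨ha₀, ha₂⟩, b, hb, hab⟩ := exists_cubic_eq_mul_add hy
  obtain ⟨θ₁, hθ₁, hcos₁⟩ :=
    exists_mem_Icc_neg_pi_pi_cos_eq (c := a - 1) ⟨by linarith, by linarith⟩
  obtain ⟨θ₂, hθ₂, hcos₂⟩ := exists_mem_Icc_neg_pi_pi_cos_eq hb
  exact ⟨θ₁, hθ₁, θ₂, hθ₂, by rw [hcos₁, hcos₂, sub_add_cancel, hab]⟩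
end

section
/- Let a ∈ [0,2] and b ∈ [−1,1]. Then every real root x of 9x³ − x = a(3x + b) satisfies x ≤ 1/3 if and only if either a = 0, or (b = −1 and a ≤ 2/3). Consequently, the largest root F₃ attains its minimal value 1/3 exactly at quasimomenta (±π, θ₂) with θ₂ ∈ [−π,π] and (θ₁, ±π) with θ₁ ∈ [−π,−θ₀] ∪ [θ₀,π], where θ₀ = arccos(−1/3). -/
/-!
For `b = -1` the cubic factors as `(3x - 1)(3x² + x - a)`, whose roots above `1/3` are those of
the quadratic factor, present exactly when `a > 2/3`. For `b > -1` and `a > 0` the cubic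
`9x³ - x - a(3x + b)` is negative at `1/3` and positive at `2`, so it has a root above `1/3`.
The quasimomentum statement is the translation through `a = cos θ₁ + 1`, `b = cos θ₂`, using that
`cos` is strictly decreasing in `|θ|` on `[-π, π]`.
-/

open Real Set

lemma graphyne_cubic_factor_of_b_eq_neg_one (a x : ℝ) :
    9 * x ^ 3 - x - a * (3 * x + -1) = (3 * x - 1) * (3 * x ^ 2 + x - a) := by
  ring

lemma le_third_of_nine_mul_cube_sub_self_eq_zero {x : ℝ} (h : 9 * x ^ 3 - x = 0) : x ≤ 1/3 := by
  by_contra! hx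
  have : 0 < x * (3 * x - 1) * (3 * x + 1) := by
    have : 0 < 3 * x - 1 := by linarith
    positivity
  nlinarith

lemma roots_le_third_of_b_eq_neg_one_iff (a : ℝ) :
    (∀ x : ℝ, 9 * x ^ 3 - x = a * (3 * x + -1) → x ≤ 1/3) ↔ a ≤ 2/3 := by
  constructor
  · intro h
    by_contra! ha
    set r := (√(1 + 12 * a) - 1) / 6
    have hs : √(1 + 12 * a) ^ 2 = 1 + 12 * a := sq_sqrt (by linarith)
    have hquad : 3 * r ^ 2 + r - a = 0 := by
      simp only [r]
      linear_combination hs / 12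
    have hr : 1/3 < r := by
      have : 3 < √(1 + 12 * a) := lt_sqrt_of_sq_lt (by linarith)
      simp only [r]
      linarith
    have hroot : 9 * r ^ 3 - r = a * (3 * r + -1) := by
      linear_combination (3 * r - 1) * hquad
    linarith [h r hroot]
  · intro ha x hx
    by_contra! hx'
    have hlin : 0 < 3 * x - 1 := by linarith
    have hquad : 0 < 3 * x ^ 2 + x - a := by nlinarith
    have := mul_pos hlin hquad
    rw [← graphyne_cubic_factor_of_b_eq_neg_one] at this
    linarith

lemma exists_root_gt_third {a b : ℝ} (ha : 0 < a) (ha' : a ≤ 2) (hb : -1 < b) (hb' : b ≤ 1) :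
    ∃ x : ℝ, 1/3 < x ∧ 9 * x ^ 3 - x = a * (3 * x + b) := by
  set f : ℝ → ℝ := fun x => 9 * x ^ 3 - x - a * (3 * x + b)
  have hf : ContinuousOn f (Icc (1/3) 2) := by fun_prop
  have hf₁ : f (1/3) < 0 := by simp only [f]; nlinarith
  have hf₂ : 0 < f 2 := by simp only [f]; nlinarith
  obtain ⟨x, hx, hfx⟩ :=
    intermediate_value_Icc (by norm_num) hf ⟨hf₁.le, hf₂.le⟩
  refine ⟨x, lt_of_le_of_ne hx.1 ?_, by simp only [f] at hfx; linarith⟩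
  rintro rfl
  exact hf₁.ne hfx

lemma graphyne_roots_le_third_iff {a b : ℝ} (ha : a ∈ Icc (0 : ℝ) 2) (hb : b ∈ Icc (-1 : ℝ) 1) :
    (∀ x : ℝ, 9 * x ^ 3 - x = a * (3 * x + b) → x ≤ 1/3) ↔ a = 0 ∨ (b = -1 ∧ a ≤ 2/3) := by
  rcases eq_or_lt_of_le ha.1 with rfl | ha₀
  · simpa using fun x => le_third_of_nine_mul_cube_sub_self_eq_zero (x := x)
  rcases eq_or_lt_of_le hb.1 with rfl | hb₁
  · simpa [ha₀.ne'] using roots_le_third_of_b_eq_neg_one_iff a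
  obtain ⟨x, hx, hroot⟩ := exists_root_gt_third ha₀ ha.2 hb₁ hb.2
  simp only [ha₀.ne', hb₁.ne', false_and, or_self, iff_false, not_forall, not_le]
  exact ⟨x, hroot, hx⟩

lemma cos_le_iff_arccos_le_abs {θ y : ℝ} (hθ : θ ∈ Icc (-π) π) (hy : y ∈ Icc (-1 : ℝ) 1) :
    cos θ ≤ y ↔ arccos y ≤ |θ| := by
  have hθ' : |θ| ∈ Icc 0 π := ⟨abs_nonneg θ, abs_le.2 hθ⟩
  have hy' : arccos y ∈ Icc 0 π := ⟨arccos_nonneg y, arccos_le_pi y⟩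
  rw [← cos_abs, ← strictAntiOn_cos.le_iff_ge hθ' hy', cos_arccos hy.1 hy.2]

lemma cos_eq_neg_one_iff_of_mem_Icc {θ : ℝ} (hθ : θ ∈ Icc (-π) π) :
    cos θ = -1 ↔ θ = π ∨ θ = -π := by
  rw [← abs_eq pi_pos.le, ← (neg_one_le_cos θ).ge_iff_eq',
    cos_le_iff_arccos_le_abs hθ (by norm_num), arccos_neg_one]
  exact ⟨fun h => le_antisymm (abs_le.2 hθ) h, ge_of_eq⟩

lemma le_abs_iff_mem_union_Icc {θ c : ℝ} (hθ : θ ∈ Icc (-π) π) :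
    c ≤ |θ| ↔ θ ∈ Icc (-π) (-c) ∪ Icc c π := by
  rw [le_abs', mem_union, mem_Icc, mem_Icc]
  constructor
  · rintro (h | h)
    · exact Or.inl ⟨hθ.1, h⟩
    · exact Or.inr ⟨h, hθ.2⟩
  · rintro (h | h)
    · exact Or.inl h.2
    · exact Or.inr h.1

/-- Every real root of 9x³ − x = a(3x+b) is ≤ 1/3 iff a = 0 or (b = −1 and a ≤ 2/3);
consequently the largest root F₃ attains its minimum 1/3 exactly at quasimomenta
(±π,θ₂), θ₂ ∈ [−π,π], and (θ₁,±π), θ₁ ∈ [−π,−θ₀] ∪ [θ₀,π], where θ₀ = arccos(−1/3). -/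
theorem graphyne_F3_min :
    (∀ a b : ℝ, a ∈ Set.Icc (0 : ℝ) 2 → b ∈ Set.Icc (-1 : ℝ) 1 →
      ((∀ x : ℝ, 9 * x ^ 3 - x = a * (3 * x + b) → x ≤ 1/3) ↔
        (a = 0 ∨ (b = -1 ∧ a ≤ 2/3)))) ∧
    (∀ θ₁ θ₂ : ℝ, θ₁ ∈ Set.Icc (-π) π → θ₂ ∈ Set.Icc (-π) π →
      ((∀ x : ℝ, 9 * x ^ 3 - x = (Real.cos θ₁ + 1) * (3 * x + Real.cos θ₂) → x ≤ 1/3) ↔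
        ((θ₁ = π ∨ θ₁ = -π) ∨
          ((θ₂ = π ∨ θ₂ = -π) ∧
            θ₁ ∈ Set.Icc (-π) (-(Real.arccos (-(1/3)))) ∪ Set.Icc (Real.arccos (-(1/3))) π)))) := by
  refine ⟨fun a b ha hb => graphyne_roots_le_third_iff ha hb, fun θ₁ θ₂ h₁ h₂ => ?_⟩
  have ha : cos θ₁ + 1 ∈ Icc (0 : ℝ) 2 := by
    constructor <;> linarith [neg_one_le_cos θ₁, cos_le_one θ₁]
  have hb : cos θ₂ ∈ Icc (-1 : ℝ) 1 := ⟨neg_one_le_cos θ₂, cos_le_one θ₂⟩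
  have hθ₀ : cos θ₁ + 1 ≤ 2/3 ↔ cos θ₁ ≤ -(1/3) := by constructor <;> intro <;> linarith
  rw [graphyne_roots_le_third_iff ha hb, add_eq_zero_iff_eq_neg, hθ₀,
    cos_le_iff_arccos_le_abs h₁ (by norm_num), le_abs_iff_mem_union_Icc h₁,
    cos_eq_neg_one_iff_of_mem_Icc h₁, cos_eq_neg_one_iff_of_mem_Icc h₂]
end

section
/- Let a ∈ [0,2], b ∈ [−1,1], and let p(x) = 9x³ − x − a(3x + b). Then p has a repeated real root (i.e., there exists x₀ with p(x₀) = 0 and p'(x₀) = 0) if and only if (a,b) = (2/3, 1) or (a,b) = (2/3, −1); in the first case the repeated root is x₀ = −1/3 and in the second case it is x₀ = 1/3. In terms of quasimomenta, two branches of the dispersion cubic meet exactly at θ = (±θ₀, 0) (value −1/3) and θ = (±θ₀, ±π) (value 1/3), where θ₀ = arccos(−1/3). -/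
/-!
Eliminating `a` with `p'(x) = 27x² - 1 - 3a = 0` turns `p(x) = 0` into `54x³ = -b(27x² - 1)`,
where `27x² - 1 = 3a ≥ 0`. Squaring and using `b² ≤ 1` gives, with `u = x²`,
`2916u³ ≤ (27u - 1)²`, i.e. `(u - 1/9)²(2916u - 81) ≤ 0`; since `u ≥ 1/27` the second factor is
positive, so `x² = 1/9`, whence `a = 2/3`, `x = ±1/3` and `b = ∓1`. On `[-π, π]` the cosine takes
the values `-1/3`, `1`, `-1` exactly at `±θ₀`, `0`, `±π`.
-/

open Real

theorem hasDerivAt_graphyne_cubic (a b x : ℝ) :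
    HasDerivAt (fun x : ℝ => 9 * x ^ 3 - x - a * (3 * x + b)) (27 * x ^ 2 - 1 - 3 * a) x := by
  have h : HasDerivAt (fun x : ℝ => 9 * x ^ 3 - x - a * (3 * x + b))
      (9 * ((3 : ℕ) * x ^ (3 - 1)) - 1 - a * (3 * 1)) x :=
    (((hasDerivAt_pow 3 x).const_mul 9).sub (hasDerivAt_id x)).sub
      ((((hasDerivAt_id x).const_mul 3).add_const b).const_mul a)
  exact h.congr_deriv (by norm_num; ring)

theorem sq_eq_one_ninth_of_graphyne_double_root {a b x : ℝ} (ha : 0 ≤ a) (hb : |b| ≤ 1)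
    (hp : 9 * x ^ 3 - x - a * (3 * x + b) = 0) (hp' : 27 * x ^ 2 - 1 - 3 * a = 0) :
    x ^ 2 = 1 / 9 := by
  have hcube : 54 * x ^ 3 = -b * (27 * x ^ 2 - 1) := by
    linear_combination (-3) * hp + (3 * x + b) * hp'
  have hbound : (54 * x ^ 3) ^ 2 ≤ (27 * x ^ 2 - 1) ^ 2 := by
    rw [hcube, mul_pow, neg_sq]
    exact mul_le_of_le_one_left (sq_nonneg _) (by nlinarith [abs_nonneg b, sq_abs b])
  have hfactor : (x ^ 2 - 1 / 9) ^ 2 * (2916 * x ^ 2 - 81) ≤ 0 := by nlinarith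
  have hsq : (x ^ 2 - 1 / 9) ^ 2 = 0 := by
    by_contra hne
    have := mul_pos (lt_of_le_of_ne (sq_nonneg _) (Ne.symm hne))
      (by linarith : (0 : ℝ) < 2916 * x ^ 2 - 81)
    linarith
  linarith [pow_eq_zero_iff two_ne_zero |>.mp hsq]

theorem graphyne_double_root_iff {a b x : ℝ} (ha : 0 ≤ a) (hb : |b| ≤ 1) :
    (9 * x ^ 3 - x - a * (3 * x + b) = 0 ∧ 27 * x ^ 2 - 1 - 3 * a = 0) ↔
      (a = 2 / 3 ∧ b = 1 ∧ x = -(1 / 3)) ∨ (a = 2 / 3 ∧ b = -1 ∧ x = 1 / 3) := by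
  constructor
  · rintro ⟨hp, hp'⟩
    have hx := sq_eq_one_ninth_of_graphyne_double_root ha hb hp hp'
    obtain rfl : a = 2 / 3 := by linarith
    have : (x - 1 / 3) * (x + 1 / 3) = 0 := by linear_combination hx
    rcases mul_eq_zero.mp this with h | h
    · obtain rfl : x = 1 / 3 := by linarith
      exact Or.inr ⟨rfl, by linarith, rfl⟩
    · obtain rfl : x = -(1 / 3) := by linarith
      exact Or.inl ⟨rfl, by linarith, rfl⟩
  · rintro (⟨rfl, rfl, rfl⟩ | ⟨rfl, rfl, rfl⟩) <;> norm_num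

theorem exists_graphyne_double_root_iff {a b : ℝ} (ha : 0 ≤ a) (hb : |b| ≤ 1) :
    (∃ x₀ : ℝ, 9 * x₀ ^ 3 - x₀ - a * (3 * x₀ + b) = 0 ∧
      deriv (fun x : ℝ => 9 * x ^ 3 - x - a * (3 * x + b)) x₀ = 0) ↔
      (a = 2 / 3 ∧ b = 1) ∨ (a = 2 / 3 ∧ b = -1) := by
  simp only [(hasDerivAt_graphyne_cubic a b _).deriv, graphyne_double_root_iff ha hb]
  constructor
  · rintro ⟨x₀, ⟨ha, hb, -⟩ | ⟨ha, hb, -⟩⟩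
    exacts [Or.inl ⟨ha, hb⟩, Or.inr ⟨ha, hb⟩]
  · rintro (⟨ha, hb⟩ | ⟨ha, hb⟩)
    exacts [⟨-(1 / 3), Or.inl ⟨ha, hb, rfl⟩⟩, ⟨1 / 3, Or.inr ⟨ha, hb, rfl⟩⟩]

theorem cos_eq_iff_eq_arccos_or_eq_neg_arccos {θ c : ℝ} (hθ : |θ| ≤ π) (hc₁ : -1 ≤ c)
    (hc₂ : c ≤ 1) : cos θ = c ↔ θ = arccos c ∨ θ = -arccos c := by
  constructor
  · rintro rfl
    rw [← cos_abs, arccos_cos (abs_nonneg θ) hθ]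
    rcases abs_choice θ with h | h <;> [left; right] <;> linarith
  · rintro (rfl | rfl)
    · exact cos_arccos hc₁ hc₂
    · rw [cos_neg, cos_arccos hc₁ hc₂]

/-- The cubic p(x) = 9x³ − x − a(3x+b) has a repeated real root iff
(a,b) = (2/3,1) (repeated root −1/3) or (a,b) = (2/3,−1) (repeated root 1/3);
in quasimomenta, exactly at θ = (±θ₀,0) and θ = (±θ₀,±π), θ₀ = arccos(−1/3). -/
theorem graphyne_cubic_repeated_root :
    (∀ a b : ℝ, a ∈ Set.Icc (0 : ℝ) 2 → b ∈ Set.Icc (-1 : ℝ) 1 →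
      (((∃ x₀ : ℝ, 9 * x₀ ^ 3 - x₀ - a * (3 * x₀ + b) = 0 ∧
          deriv (fun x : ℝ => 9 * x ^ 3 - x - a * (3 * x + b)) x₀ = 0) ↔
        ((a = 2/3 ∧ b = 1) ∨ (a = 2/3 ∧ b = -1))) ∧
      (∀ x₀ : ℝ, 9 * x₀ ^ 3 - x₀ - a * (3 * x₀ + b) = 0 →
        deriv (fun x : ℝ => 9 * x ^ 3 - x - a * (3 * x + b)) x₀ = 0 →
        ((a = 2/3 ∧ b = 1) → x₀ = -(1/3)) ∧ ((a = 2/3 ∧ b = -1) → x₀ = 1/3)))) ∧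
    (∀ θ₁ θ₂ : ℝ, θ₁ ∈ Set.Icc (-π) π → θ₂ ∈ Set.Icc (-π) π →
      ((∃ x₀ : ℝ, 9 * x₀ ^ 3 - x₀ - (Real.cos θ₁ + 1) * (3 * x₀ + Real.cos θ₂) = 0 ∧
          deriv (fun x : ℝ =>
            9 * x ^ 3 - x - (Real.cos θ₁ + 1) * (3 * x + Real.cos θ₂)) x₀ = 0) ↔
        (((θ₁ = Real.arccos (-(1/3)) ∨ θ₁ = -Real.arccos (-(1/3))) ∧ θ₂ = 0) ∨
         ((θ₁ = Real.arccos (-(1/3)) ∨ θ₁ = -Real.arccos (-(1/3))) ∧ (θ₂ = π ∨ θ₂ = -π))))) := by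
  refine ⟨fun a b ha hb => ?_, fun θ₁ θ₂ hθ₁ hθ₂ => ?_⟩
  · have hb' : |b| ≤ 1 := abs_le.mpr hb
    refine ⟨exists_graphyne_double_root_iff ha.1 hb', fun x₀ hp hp' => ?_⟩
    rw [(hasDerivAt_graphyne_cubic a b x₀).deriv] at hp'
    rcases (graphyne_double_root_iff ha.1 hb').mp ⟨hp, hp'⟩ with
      ⟨-, rfl, rfl⟩ | ⟨-, rfl, rfl⟩ <;> norm_num
  · have hcos₁ :
        cos θ₁ + 1 = 2 / 3 ↔ θ₁ = arccos (-(1 / 3)) ∨ θ₁ = -arccos (-(1 / 3)) := by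
      rw [← cos_eq_iff_eq_arccos_or_eq_neg_arccos (abs_le.mpr hθ₁) (by norm_num) (by norm_num)]
      constructor <;> intro h <;> linarith
    have hcos₂_one : cos θ₂ = 1 ↔ θ₂ = 0 := by
      simpa [arccos_one] using
        cos_eq_iff_eq_arccos_or_eq_neg_arccos (abs_le.mpr hθ₂) (by norm_num) le_rfl
    have hcos₂_neg_one : cos θ₂ = -1 ↔ θ₂ = π ∨ θ₂ = -π := by
      simpa [arccos_neg_one] using
        cos_eq_iff_eq_arccos_or_eq_neg_arccos (abs_le.mpr hθ₂) le_rfl (by norm_num)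
    rw [exists_graphyne_double_root_iff (by linarith [neg_one_le_cos θ₁]) (abs_cos_le_one θ₂),
      hcos₁, hcos₂_one, hcos₂_neg_one]
end

section
/- Let p₁, p₂ ∈ ℤ, not both zero, k₀ ∈ ℤ, and c ∈ ℝ. Suppose the line L = {(θ₁,θ₂) ∈ ℝ² : p₁θ₁ + p₂θ₂ = 2k₀π} meets the open square (−π,π)², and that 9c³ − c = (cos θ₁ + 1)(3c + cos θ₂) holds for every (θ₁,θ₂) ∈ L ∩ [−π,π]². Then p₁ = 0, and setting t = 2k₀π/p₂ one has either (t = 0 and c = −1/3) or (t = π/2 or t = −π/2, and c = 0). In particular c ∈ {0, 1/3, −1/3}, and the only linear level sets of the root function meeting the interior of the Brillouin zone are the horizontal lines θ₂ = 0 and θ₂ = ±π/2. -/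
/-!
Parametrize the line through an interior point `(a, b)` as `t ↦ (a + p₂ t, b - p₁ t)`. Along it
the right-hand side of the cubic is a real-analytic function of `t` that is constant near `t = 0`,
hence constant on all of `ℝ` by the identity theorem. If `p₁ ≠ 0`, the second coordinate runs
through both `0` and `π`: for `p₂ = 0` this contradicts `cos a > -1` directly, and for `p₂ ≠ 0`
the first coordinate also reaches `π`, so the constant is `0`; then `3c + cos θ₂` vanishes near the
point where `θ₁ = 0` and therefore everywhere, which is again absurd. So the line is horizontal,
`θ₂ = b`, and evaluating at `θ₁ = π` and `θ₁ = 0` gives `9c³ - c = 0` and `cos b = -3c`.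
-/

open Real Filter Topology

theorem AnalyticOnNhd.eq_zero_of_mul_eq_zero {𝕜 E : Type*} [NontriviallyNormedField 𝕜]
    [NormedAddCommGroup E] [NormedSpace 𝕜 E] [PreconnectedSpace E] {f g : E → 𝕜} {z₀ : E}
    (hg : AnalyticOnNhd 𝕜 g Set.univ) (hf : ContinuousAt f z₀) (hfz₀ : f z₀ ≠ 0)
    (hfg : ∀ᶠ z in 𝓝 z₀, f z * g z = 0) : g = 0 :=
  hg.eq_of_eventuallyEq analyticOnNhd_const <| by
    filter_upwards [hf.eventually_ne hfz₀, hfg] with z hfz hfgz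
    exact (mul_eq_zero.mp hfgz).resolve_left hfz

namespace Real

theorem neg_one_lt_cos_of_mem_Ioo {x : ℝ} (hx : x ∈ Set.Ioo (-π) π) : -1 < cos x := by
  rw [← cos_abs, ← cos_pi]
  exact cos_lt_cos_of_nonneg_of_le_pi (abs_nonneg x) le_rfl (abs_lt.mpr hx)

theorem cos_eq_zero_iff_of_mem_Ioo {x : ℝ} (hx : x ∈ Set.Ioo (-π) π) :
    cos x = 0 ↔ x = π / 2 ∨ x = -(π / 2) := by
  have hπ := pi_pos
  rw [← abs_eq (by positivity), ← cos_abs, ← cos_pi_div_two]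
  refine ⟨fun h => injOn_cos ⟨abs_nonneg x, (abs_lt.mpr hx).le⟩ ⟨by positivity, by linarith⟩ h,
    fun h => by rw [h]⟩

end Real

theorem not_eventually_cos_add_one_mul_eq {p₁ p₂ a b c K : ℝ} (hp₁ : p₁ ≠ 0) (ha : -1 < cos a) :
    ¬ ∀ᶠ t in 𝓝 0, (cos (a + p₂ * t) + 1) * (3 * c + cos (b - p₁ * t)) = K := by
  intro h
  have hF := congrFun (AnalyticOnNhd.eq_of_eventuallyEq (fun _ _ => by fun_prop)
    analyticOnNhd_const h)
  obtain ⟨t₀, ht₀⟩ : ∃ t, b - p₁ * t = 0 := ⟨b / p₁, by field_simp; ring⟩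
  obtain ⟨t₁, ht₁⟩ : ∃ t, b - p₁ * t = π := ⟨(b - π) / p₁, by field_simp; ring⟩
  rcases eq_or_ne p₂ 0 with hp₂ | hp₂
  · have h₀ := hF t₀
    have h₁ := hF t₁
    simp only [hp₂, zero_mul, add_zero, ht₀, ht₁, cos_zero, cos_pi] at h₀ h₁
    linarith
  · obtain ⟨s, hs⟩ : ∃ s, a + p₂ * s = π := ⟨(π - a) / p₂, by field_simp; ring⟩
    have hK : K = 0 := by simpa [hs] using (hF s).symm
    have hg := AnalyticOnNhd.eq_zero_of_mul_eq_zero (f := fun t => cos (a + p₂ * t) + 1)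
      (g := fun t => 3 * c + cos (b - p₁ * t)) (z₀ := -a / p₂) (fun _ _ => by fun_prop)
      (by fun_prop) (by field_simp; norm_num) (.of_forall fun t => hK ▸ hF t)
    have h₀ := congrFun hg t₀
    have h₁ := congrFun hg t₁
    simp only [ht₀, ht₁, cos_zero, cos_pi, Pi.zero_apply] at h₀ h₁
    linarith

theorem horizontal_level_set_cases {b c : ℝ} (hb : b ∈ Set.Ioo (-π) π)
    (h : ∀ θ₁ ∈ Set.Icc (-π) π, 9 * c ^ 3 - c = (cos θ₁ + 1) * (3 * c + cos b)) :
    (b = 0 ∧ c = -(1 / 3)) ∨ ((b = π / 2 ∨ b = -(π / 2)) ∧ c = 0) := by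
  have hπ := pi_pos
  have h_pi := h π ⟨by linarith, le_rfl⟩
  have h_zero := h 0 ⟨by linarith, hπ.le⟩
  rw [cos_pi] at h_pi
  rw [cos_zero] at h_zero
  have hcos : cos b = -(3 * c) := by linarith
  have hc : c * ((3 * c - 1) * (3 * c + 1)) = 0 := by linear_combination h_pi
  rcases (mul_eq_zero.mp hc).imp_right mul_eq_zero.mp with hc | hc | hc
  · exact .inr ⟨(cos_eq_zero_iff_of_mem_Ioo hb).mp (by rw [hcos, hc]; ring), hc⟩
  · have := neg_one_lt_cos_of_mem_Ioo hb
    linarith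
  · refine .inl ⟨(cos_eq_one_iff_of_lt_of_lt (by linarith [hb.1]) (by linarith [hb.2])).mp
      (by linarith), by linarith⟩

/-- Classification of linear level sets of the root function of the dispersion cubic
that meet the interior of the Brillouin zone: only the horizontal lines θ₂ = 0
(with constant branch c = −1/3) and θ₂ = ±π/2 (with constant branch c = 0). -/
theorem graphyne_linear_level_sets (p₁ p₂ k₀ : ℤ) (hp : ¬(p₁ = 0 ∧ p₂ = 0)) (c : ℝ)
    (hmeet : ∃ θ₁ θ₂ : ℝ, θ₁ ∈ Set.Ioo (-π) π ∧ θ₂ ∈ Set.Ioo (-π) π ∧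
      (p₁ : ℝ) * θ₁ + (p₂ : ℝ) * θ₂ = 2 * (k₀ : ℝ) * π)
    (heq : ∀ θ₁ θ₂ : ℝ, θ₁ ∈ Set.Icc (-π) π → θ₂ ∈ Set.Icc (-π) π →
      (p₁ : ℝ) * θ₁ + (p₂ : ℝ) * θ₂ = 2 * (k₀ : ℝ) * π →
      9 * c ^ 3 - c = (Real.cos θ₁ + 1) * (3 * c + Real.cos θ₂)) :
    p₁ = 0 ∧
    ((2 * (k₀ : ℝ) * π / (p₂ : ℝ) = 0 ∧ c = -(1/3)) ∨
      ((2 * (k₀ : ℝ) * π / (p₂ : ℝ) = π/2 ∨ 2 * (k₀ : ℝ) * π / (p₂ : ℝ) = -(π/2)) ∧ c = 0)) ∧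
    (c = 0 ∨ c = 1/3 ∨ c = -(1/3)) := by
  obtain ⟨a, b, ha, hb, hab⟩ := hmeet
  have hp₁ : p₁ = 0 := by
    by_contra hp₁
    refine not_eventually_cos_add_one_mul_eq (p₂ := p₂) (b := b) (c := c) (K := 9 * c ^ 3 - c)
      (Int.cast_ne_zero.mpr hp₁) (neg_one_lt_cos_of_mem_Ioo ha) ?_
    have hu : ∀ᶠ t in 𝓝 (0 : ℝ), a + p₂ * t ∈ Set.Icc (-π) π :=
      (by fun_prop : Continuous fun t : ℝ => a + p₂ * t).continuousAt.eventually_mem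
        (by simpa using Icc_mem_nhds ha.1 ha.2)
    have hv : ∀ᶠ t in 𝓝 (0 : ℝ), b - p₁ * t ∈ Set.Icc (-π) π :=
      (by fun_prop : Continuous fun t : ℝ => b - p₁ * t).continuousAt.eventually_mem
        (by simpa using Icc_mem_nhds hb.1 hb.2)
    filter_upwards [hu, hv] with t hut hvt
    exact (heq _ _ hut hvt (by linear_combination hab)).symm
  have hp₂ : (p₂ : ℝ) ≠ 0 := by exact_mod_cast fun h => hp ⟨hp₁, h⟩
  have hline : 2 * (k₀ : ℝ) * π / p₂ = b := by
    rw [← hab, hp₁, Int.cast_zero, zero_mul, zero_add, mul_div_cancel_left₀ _ hp₂]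
  have hlevel := horizontal_level_set_cases hb fun θ₁ hθ₁ =>
    heq θ₁ b hθ₁ (Set.Ioo_subset_Icc_self hb) (by rw [← hab, hp₁]; simp)
  rw [hline]
  refine ⟨hp₁, hlevel, ?_⟩
  rcases hlevel with ⟨-, hc⟩ | ⟨-, hc⟩ <;> simp [hc]
end

section
/- Let q : ℝ → ℝ be continuous with q(x) = q(1−x) for all x ∈ [0,1], let λ ∈ ℝ, and let u be twice continuously differentiable on [0,1], not identically zero, with −u'' + q·u = λ·u on [0,1] and u(0) = u(1) = 0 (a Dirichlet eigenfunction). Then there exists a twice continuously differentiable ψ on [0,1], not identically zero, satisfying −ψ'' + q·ψ = λ·ψ on [0,1] and either the periodic boundary conditions ψ(1) = ψ(0) and ψ'(1) = ψ'(0), or the antiperiodic boundary conditions ψ(1) = −ψ(0) and ψ'(1) = −ψ'(0). (One may take ψ = u − u∘(1−·) or ψ = u + u∘(1−·).) Hence every Dirichlet eigenvalue of −d²/dx² + q with even q is a periodic or antiperiodic eigenvalue, i.e., it lies at an edge of a spectral gap of the associated Hill operator. -/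
/-!
Reflection `x ↦ 1 - x` maps solutions of `-u'' + q u = λ u` on `[0, 1]` to solutions when `q` is
even, so `u ± u(1 - ·)` are solutions, even resp. odd about `1/2`. Their derivatives are then odd
resp. even, which gives `ψ'(1) = ∓ψ'(0)`, while the Dirichlet conditions make `ψ(0) = ψ(1) = 0`.
Since `u` is half their sum, one of the two is nonzero.
-/

section Deriv

variable {𝕜 F : Type*} [NontriviallyNormedField 𝕜] [NormedAddCommGroup F] [NormedSpace 𝕜 F]
  {f g : 𝕜 → F} (a : 𝕜)

lemma deriv_const_sub_of_comp_const_sub_eq (h : (fun x ↦ f (a - x)) = f) (x : 𝕜) :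
    deriv f (a - x) = -deriv f x := by
  have hx := deriv_comp_const_sub f a x
  rw [h] at hx
  rw [hx, neg_neg]

lemma deriv_const_sub_of_comp_const_sub_eq_neg (h : (fun x ↦ f (a - x)) = -f) (x : 𝕜) :
    deriv f (a - x) = deriv f x := by
  simpa [h] using (deriv_comp_const_sub f a x).symm

lemma deriv_deriv_comp_const_sub (x : 𝕜) :
    deriv (deriv fun x ↦ f (a - x)) x = deriv (deriv f) (a - x) := by
  rw [funext (deriv_comp_const_sub f a), deriv.fun_neg, deriv_comp_const_sub, neg_neg]

lemma ContDiff.differentiable_deriv_of_two (hf : ContDiff 𝕜 2 f) : Differentiable 𝕜 (deriv f) :=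
  (ContDiff.deriv' (n := 1) hf).differentiable one_ne_zero

lemma deriv_deriv_add (hf : ContDiff 𝕜 2 f) (hg : ContDiff 𝕜 2 g) (x : 𝕜) :
    deriv (deriv (f + g)) x = deriv (deriv f) x + deriv (deriv g) x := by
  have hfg : deriv (f + g) = deriv f + deriv g :=
    funext fun y ↦ deriv_add (hf.differentiable two_ne_zero y) (hg.differentiable two_ne_zero y)
  rw [hfg, deriv_add (hf.differentiable_deriv_of_two x) (hg.differentiable_deriv_of_two x)]

lemma deriv_deriv_sub (hf : ContDiff 𝕜 2 f) (hg : ContDiff 𝕜 2 g) (x : 𝕜) :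
    deriv (deriv (f - g)) x = deriv (deriv f) x - deriv (deriv g) x := by
  have hfg : deriv (f - g) = deriv f - deriv g :=
    funext fun y ↦ deriv_sub (hf.differentiable two_ne_zero y) (hg.differentiable two_ne_zero y)
  rw [hfg, deriv_sub (hf.differentiable_deriv_of_two x) (hg.differentiable_deriv_of_two x)]

end Deriv

def SolvesSchrodingerOn (q : ℝ → ℝ) (lam : ℝ) (s : Set ℝ) (u : ℝ → ℝ) : Prop :=
  ∀ x ∈ s, -(deriv (deriv u) x) + q x * u x = lam * u x

namespace SolvesSchrodingerOn

variable {q u v : ℝ → ℝ} {lam : ℝ} {s : Set ℝ}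

lemma add (hu : ContDiff ℝ 2 u) (hv : ContDiff ℝ 2 v) (hsu : SolvesSchrodingerOn q lam s u)
    (hsv : SolvesSchrodingerOn q lam s v) : SolvesSchrodingerOn q lam s (u + v) := by
  intro x hx
  rw [deriv_deriv_add hu hv, Pi.add_apply]
  linear_combination hsu x hx + hsv x hx

lemma sub (hu : ContDiff ℝ 2 u) (hv : ContDiff ℝ 2 v) (hsu : SolvesSchrodingerOn q lam s u)
    (hsv : SolvesSchrodingerOn q lam s v) : SolvesSchrodingerOn q lam s (u - v) := by
  intro x hx
  rw [deriv_deriv_sub hu hv, Pi.sub_apply]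
  linear_combination hsu x hx - hsv x hx

lemma comp_const_sub (a : ℝ) (hq : ∀ x ∈ s, q x = q (a - x)) (hs : ∀ x ∈ s, a - x ∈ s)
    (hu : SolvesSchrodingerOn q lam s u) : SolvesSchrodingerOn q lam s fun x ↦ u (a - x) := by
  intro x hx
  rw [deriv_deriv_comp_const_sub, hq x hx]
  exact hu (a - x) (hs x hx)

end SolvesSchrodingerOn

theorem hill_dirichlet_eigenvalue_is_band_edge_general (q : ℝ → ℝ)
    (hqsym : ∀ x ∈ Set.Icc (0 : ℝ) 1, q x = q (1 - x)) (lam : ℝ)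
    (u : ℝ → ℝ) (hu : ContDiff ℝ 2 u)
    (hune : ¬ ∀ x ∈ Set.Icc (0 : ℝ) 1, u x = 0)
    (hode : ∀ x ∈ Set.Icc (0 : ℝ) 1, -(deriv (deriv u) x) + q x * u x = lam * u x)
    (h0 : u 0 = 0) (h1 : u 1 = 0) :
    ∃ ψ : ℝ → ℝ, ContDiff ℝ 2 ψ ∧ (¬ ∀ x ∈ Set.Icc (0 : ℝ) 1, ψ x = 0) ∧
      (∀ x ∈ Set.Icc (0 : ℝ) 1, -(deriv (deriv ψ) x) + q x * ψ x = lam * ψ x) ∧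
      ((ψ 1 = ψ 0 ∧ deriv ψ 1 = deriv ψ 0) ∨
       (ψ 1 = -ψ 0 ∧ deriv ψ 1 = -deriv ψ 0)) := by
  set v : ℝ → ℝ := fun x ↦ u (1 - x)
  have hv : ContDiff ℝ 2 v := hu.comp (contDiff_const.sub contDiff_id)
  have hsolv : SolvesSchrodingerOn q lam (Set.Icc 0 1) v :=
    SolvesSchrodingerOn.comp_const_sub 1 hqsym (fun x hx ↦ ⟨by linarith [hx.2], by linarith [hx.1]⟩)
      hode
  by_cases hsym : ∀ x ∈ Set.Icc (0 : ℝ) 1, (u - v) x = 0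
  · have heven : (fun x ↦ (u + v) (1 - x)) = u + v := by
      ext x; simp [v, add_comm]
    refine ⟨u + v, hu.add hv, fun h ↦ hune fun x hx ↦ ?_, SolvesSchrodingerOn.add hu hv hode hsolv,
      Or.inr ⟨by simp [v, h0, h1], by simpa using deriv_const_sub_of_comp_const_sub_eq 1 heven 0⟩⟩
    linarith [h x hx, hsym x hx, Pi.add_apply u v x, Pi.sub_apply u v x]
  · have hodd : (fun x ↦ (u - v) (1 - x)) = -(u - v) := by
      ext x; simp [v]
    refine ⟨u - v, hu.sub hv, hsym, SolvesSchrodingerOn.sub hu hv hode hsolv,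
      Or.inl ⟨by simp [v, h0, h1], by simpa using deriv_const_sub_of_comp_const_sub_eq_neg 1 hodd 0⟩⟩

/-- For an even potential q on [0,1], every Dirichlet eigenfunction u of −d²/dx² + q
at energy λ produces (as u ± u∘(1−·)) a nonzero solution ψ of the same equation
satisfying periodic or antiperiodic boundary conditions; hence every Dirichlet
eigenvalue is a periodic or antiperiodic eigenvalue of the Hill operator. -/
theorem hill_dirichlet_eigenvalue_is_band_edge (q : ℝ → ℝ) (hq : Continuous q)
    (hqsym : ∀ x ∈ Set.Icc (0 : ℝ) 1, q x = q (1 - x)) (lam : ℝ)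
    (u : ℝ → ℝ) (hu : ContDiff ℝ 2 u)
    (hune : ¬ ∀ x ∈ Set.Icc (0 : ℝ) 1, u x = 0)
    (hode : ∀ x ∈ Set.Icc (0 : ℝ) 1, -(deriv (deriv u) x) + q x * u x = lam * u x)
    (h0 : u 0 = 0) (h1 : u 1 = 0) :
    ∃ ψ : ℝ → ℝ, ContDiff ℝ 2 ψ ∧ (¬ ∀ x ∈ Set.Icc (0 : ℝ) 1, ψ x = 0) ∧
      (∀ x ∈ Set.Icc (0 : ℝ) 1, -(deriv (deriv ψ) x) + q x * ψ x = lam * ψ x) ∧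
      ((ψ 1 = ψ 0 ∧ deriv ψ 1 = deriv ψ 0) ∨
       (ψ 1 = -ψ 0 ∧ deriv ψ 1 = -deriv ψ 0)) :=
  hill_dirichlet_eigenvalue_is_band_edge_general q hqsym lam u hu hune hode h0 h1
end
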